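/- If a proper pin sequence p_1, …, p_m (viewed as a set of points in the plane with distinct coordinates) contains 3(p+q) turns, then the permutation order-isomorphic to {p_1,…,p_m} contains ⊕_p 21 or ⊖_q 12. -/
import Mathlib


/-- The four possible directions of a pin. -/
inductive PinDir | up | down | left | right
deriving DecidableEq

/-- The opposite of a direction. -/
def PinDir.opp : PinDir → PinDir
  | .up => .down
  | .down => .up
  | .left => .right
  | .right => .left

/-- `q`'s x-coordinate lies strictly inside the x-extent of
`rect(p 0, …, p (i-1))`. -/
def inHullX (p : ℕ → ℝ × ℝ) (i : ℕ) (q : ℝ × ℝ) : Prop :=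
  (∃ j < i, (p j).1 < q.1) ∧ (∃ j < i, q.1 < (p j).1)

/-- `q`'s y-coordinate lies strictly inside the y-extent of
`rect(p 0, …, p (i-1))`. -/
def inHullY (p : ℕ → ℝ × ℝ) (i : ℕ) (q : ℝ × ℝ) : Prop :=
  (∃ j < i, (p j).2 < q.2) ∧ (∃ j < i, q.2 < (p j).2)

def aboveAll (p : ℕ → ℝ × ℝ) (i : ℕ) (q : ℝ × ℝ) : Prop := ∀ j < i, (p j).2 < q.2
def belowAll (p : ℕ → ℝ × ℝ) (i : ℕ) (q : ℝ × ℝ) : Prop := ∀ j < i, q.2 < (p j).2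
def rightOfAll (p : ℕ → ℝ × ℝ) (i : ℕ) (q : ℝ × ℝ) : Prop := ∀ j < i, (p j).1 < q.1
def leftOfAll (p : ℕ → ℝ × ℝ) (i : ℕ) (q : ℝ × ℝ) : Prop := ∀ j < i, q.1 < (p j).1

/-- `q` slices the rectangular hull `rect(p 0, …, p (i-1))`: its x-coordinate is
strictly inside the hull's x-range and its y-coordinate outside the y-range,
or vice versa. -/
def slicesHull (p : ℕ → ℝ × ℝ) (i : ℕ) (q : ℝ × ℝ) : Prop :=
  (inHullX p i q ∧ (aboveAll p i q ∨ belowAll p i q)) ∨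
  (inHullY p i q ∧ (rightOfAll p i q ∨ leftOfAll p i q))

/-- The pin `p i` has direction `d` relative to `rect(p 0, …, p (i-1))`. -/
def hasDir (p : ℕ → ℝ × ℝ) (i : ℕ) : PinDir → Prop
  | .up => inHullX p i (p i) ∧ aboveAll p i (p i)
  | .down => inHullX p i (p i) ∧ belowAll p i (p i)
  | .right => inHullY p i (p i) ∧ rightOfAll p i (p i)
  | .left => inHullY p i (p i) ∧ leftOfAll p i (p i)

/-- Separation condition: `p (i+1)` lies horizontally or vertically between
`rect(p 0, …, p (i-1))` and `p i`. -/
def separatesNext (p : ℕ → ℝ × ℝ) (i : ℕ) : Prop :=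
  (∀ j < i, (p j).1 < (p (i+1)).1 ∧ (p (i+1)).1 < (p i).1) ∨
  (∀ j < i, (p i).1 < (p (i+1)).1 ∧ (p (i+1)).1 < (p j).1) ∨
  (∀ j < i, (p j).2 < (p (i+1)).2 ∧ (p (i+1)).2 < (p i).2) ∨
  (∀ j < i, (p i).2 < (p (i+1)).2 ∧ (p (i+1)).2 < (p j).2)

/-- Maximality condition: `p i` is extremal in its direction among the points of
the ambient set `S` slicing `rect(p 0, …, p (i-1))`. -/
def maximalAt (S : Set (ℝ × ℝ)) (p : ℕ → ℝ × ℝ) (i : ℕ) : Prop :=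
  (hasDir p i .up → ∀ q ∈ S, slicesHull p i q → q.2 ≤ (p i).2) ∧
  (hasDir p i .down → ∀ q ∈ S, slicesHull p i q → (p i).2 ≤ q.2) ∧
  (hasDir p i .right → ∀ q ∈ S, slicesHull p i q → q.1 ≤ (p i).1) ∧
  (hasDir p i .left → ∀ q ∈ S, slicesHull p i q → (p i).1 ≤ q.1)

/-- `p 0, …, p (m-1)` is a proper pin sequence among the points of `S`
(the plot of a permutation, so distinct x- and y-coordinates): each `p i`
(`i ≥ 2`) slices the hull of its predecessors, is maximal in its direction,
and each pin separates its predecessor from the earlier hull. -/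
def ProperPinSeq (S : Set (ℝ × ℝ)) (p : ℕ → ℝ × ℝ) (m : ℕ) : Prop :=
  (∀ i < m, p i ∈ S) ∧
  (∀ q ∈ S, ∀ r ∈ S, q ≠ r → q.1 ≠ r.1 ∧ q.2 ≠ r.2) ∧
  (∀ i < m, ∀ j < m, i ≠ j → p i ≠ p j) ∧
  (∀ i, 2 ≤ i → i < m → slicesHull p i (p i)) ∧
  (∀ i, 2 ≤ i → i < m → maximalAt S p i) ∧
  (∀ i, 2 ≤ i → i + 1 < m → separatesNext p i)

/-- The 0-indexed pattern `⊕_a 21 = 21 43 65 ⋯`. -/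
def pat21 (t : ℕ) : ℕ := if t % 2 = 0 then t + 1 else t - 1

/-- The 0-indexed pattern `⊖_b 12 = (2b-2)(2b-1)(2b-4)(2b-3)⋯01`. -/
def patSkew12 (b t : ℕ) : ℕ := 2 * (b - 1 - t / 2) + t % 2

/-- The point set `{p 0, …, p (m-1)}` contains the pattern given by
`val : ℕ → ℕ` on `2c` points: some choice of points, listed by increasing
x-coordinate, has its y-coordinates ordered as the pattern values. -/
def containsPattern (p : ℕ → ℝ × ℝ) (m c : ℕ) (val : ℕ → ℕ) : Prop :=
  ∃ f : Fin (2 * c) → ℕ, (∀ t, f t < m) ∧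
    StrictMono (fun t => (p (f t)).1) ∧
    ∀ s t : Fin (2 * c), (p (f s)).2 < (p (f t)).2 ↔ val (s : ℕ) < val (t : ℕ)


namespace Stmt14Aux

/-- Pair `(p (i-1), p i)` forms a 21 pattern (left point higher). -/
def pairDec (p : ℕ → ℝ × ℝ) (i : ℕ) : Prop :=
  ((p (i-1)).1 < (p i).1 ∧ (p i).2 < (p (i-1)).2) ∨
  ((p i).1 < (p (i-1)).1 ∧ (p (i-1)).2 < (p i).2)

/-- Pair `(p (i-1), p i)` forms a 12 pattern. -/
def pairInc (p : ℕ → ℝ × ℝ) (i : ℕ) : Prop :=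
  ((p (i-1)).1 < (p i).1 ∧ (p (i-1)).2 < (p i).2) ∨
  ((p i).1 < (p (i-1)).1 ∧ (p i).2 < (p (i-1)).2)

def NE (p : ℕ → ℝ × ℝ) (i : ℕ) : Prop :=
  (∀ j, j + 3 ≤ i → (p j).1 < (p (i-1)).1 ∧ (p j).1 < (p i).1 ∧
      (p j).2 < (p (i-1)).2 ∧ (p j).2 < (p i).2) ∧ pairDec p i

def SW (p : ℕ → ℝ × ℝ) (i : ℕ) : Prop :=
  (∀ j, j + 3 ≤ i → (p (i-1)).1 < (p j).1 ∧ (p i).1 < (p j).1 ∧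
      (p (i-1)).2 < (p j).2 ∧ (p i).2 < (p j).2) ∧ pairDec p i

def NW (p : ℕ → ℝ × ℝ) (i : ℕ) : Prop :=
  (∀ j, j + 3 ≤ i → (p (i-1)).1 < (p j).1 ∧ (p i).1 < (p j).1 ∧
      (p j).2 < (p (i-1)).2 ∧ (p j).2 < (p i).2) ∧ pairInc p i

def SE (p : ℕ → ℝ × ℝ) (i : ℕ) : Prop :=
  (∀ j, j + 3 ≤ i → (p j).1 < (p (i-1)).1 ∧ (p j).1 < (p i).1 ∧
      (p (i-1)).2 < (p j).2 ∧ (p i).2 < (p j).2) ∧ pairInc p i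

lemma turn_class (p : ℕ → ℝ × ℝ) (m i : ℕ) (h4 : 4 ≤ i) (him : i < m)
    (hsep : ∀ i', 2 ≤ i' → i' + 1 < m → separatesNext p i')
    (d : PinDir) (hd : hasDir p i d) (hd2 : hasDir p (i-2) d) :
    NE p i ∨ SW p i ∨ NW p i ∨ SE p i := by
  have e1 : i - 1 + 1 = i := by omega
  have e2 : i - 2 + 1 = i - 1 := by omega
  have hsep1 := hsep (i-1) (by omega) (by omega)
  have hsep2 := hsep (i-2) (by omega) (by omega)
  unfold separatesNext at hsep1 hsep2
  rw [e1] at hsep1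
  rw [e2] at hsep2
  have h0i1 : (0:ℕ) < i - 1 := by omega
  have h0i2 : (0:ℕ) < i - 2 := by omega
  have hi1i : i - 1 < i := by omega
  have hi2i1 : i - 2 < i - 1 := by omega
  cases d with
  | up =>
    obtain ⟨hX, hA⟩ := hd
    obtain ⟨hX2, hA2⟩ := hd2
    -- the separation at i-2 must be the vertical clause 3
    have C2 : ∀ j, j < i - 2 → (p j).2 < (p (i-1)).2 ∧ (p (i-1)).2 < (p (i-2)).2 := by
      rcases hsep2 with h | h | h | h
      · obtain ⟨j, hj, hji⟩ := hX2.2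
        have := h j hj
        linarith
      · obtain ⟨j, hj, hji⟩ := hX2.1
        have := h j hj
        linarith
      · exact h
      · have h0 := h 0 h0i2
        have := hA2 0 h0i2
        linarith
    have hAi1 : (p (i-1)).2 < (p i).2 := hA (i-1) hi1i
    rcases hsep1 with h | h | h | h
    · -- right: NE
      left
      refine ⟨fun j hj => ?_, Or.inr ⟨(h 0 h0i1).2, hAi1⟩⟩
      have hj1 : j < i - 2 := by omega
      have hj2 : j < i - 1 := by omega
      have h1 := h j hj2
      have h2 := C2 j hj1
      exact ⟨by linarith, h1.1, h2.1, hA j (by omega)⟩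
    · -- left: NW
      right; right; left
      refine ⟨fun j hj => ?_, Or.inl ⟨(h 0 h0i1).1, hAi1⟩⟩
      have hj1 : j < i - 2 := by omega
      have hj2 : j < i - 1 := by omega
      have h1 := h j hj2
      have h2 := C2 j hj1
      exact ⟨by linarith, h1.2, h2.1, hA j (by omega)⟩
    · -- contradiction: p i above all but clause says below p (i-1)
      have h0 := h 0 h0i1
      have := hA (i-1) hi1i
      exact absurd this (by linarith)
    · have h0 := h 0 h0i1
      have := hA 0 (by omega)
      exact absurd this (by linarith)
  | down =>
    obtain ⟨hX, hB⟩ := hd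
    obtain ⟨hX2, hB2⟩ := hd2
    have C2 : ∀ j, j < i - 2 → (p (i-2)).2 < (p (i-1)).2 ∧ (p (i-1)).2 < (p j).2 := by
      rcases hsep2 with h | h | h | h
      · obtain ⟨j, hj, hji⟩ := hX2.2
        have := h j hj
        linarith
      · obtain ⟨j, hj, hji⟩ := hX2.1
        have := h j hj
        linarith
      · have h0 := h 0 h0i2
        have := hB2 0 h0i2
        linarith
      · exact h
    have hBi1 : (p i).2 < (p (i-1)).2 := hB (i-1) hi1i
    rcases hsep1 with h | h | h | h
    · -- right: SE
      right; right; right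
      refine ⟨fun j hj => ?_, Or.inr ⟨(h 0 h0i1).2, hBi1⟩⟩
      have hj1 : j < i - 2 := by omega
      have hj2 : j < i - 1 := by omega
      have h1 := h j hj2
      have h2 := C2 j hj1
      exact ⟨by linarith, h1.1, h2.2, hB j (by omega)⟩
    · -- left: SW
      right; left
      refine ⟨fun j hj => ?_, Or.inl ⟨(h 0 h0i1).1, hBi1⟩⟩
      have hj1 : j < i - 2 := by omega
      have hj2 : j < i - 1 := by omega
      have h1 := h j hj2
      have h2 := C2 j hj1
      exact ⟨by linarith, h1.2, h2.2, hB j (by omega)⟩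
    · have h0 := h 0 h0i1
      have := hB 0 (by omega)
      exact absurd this (by linarith)
    · have h0 := h 0 h0i1
      have := hB (i-1) hi1i
      exact absurd this (by linarith)
  | right =>
    obtain ⟨hY, hR⟩ := hd
    obtain ⟨hY2, hR2⟩ := hd2
    have C2 : ∀ j, j < i - 2 → (p j).1 < (p (i-1)).1 ∧ (p (i-1)).1 < (p (i-2)).1 := by
      rcases hsep2 with h | h | h | h
      · exact h
      · have h0 := h 0 h0i2
        have := hR2 0 h0i2
        linarith
      · obtain ⟨j, hj, hji⟩ := hY2.2
        have := h j hj
        linarith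
      · obtain ⟨j, hj, hji⟩ := hY2.1
        have := h j hj
        linarith
    have hRi1 : (p (i-1)).1 < (p i).1 := hR (i-1) hi1i
    rcases hsep1 with h | h | h | h
    · have h0 := h 0 h0i1
      have := hR (i-1) hi1i
      exact absurd this (by linarith)
    · have h0 := h 0 h0i1
      have := hR 0 (by omega)
      exact absurd this (by linarith)
    · -- up: NE
      left
      refine ⟨fun j hj => ?_, Or.inl ⟨hRi1, (h 0 h0i1).2⟩⟩
      have hj1 : j < i - 2 := by omega
      have hj2 : j < i - 1 := by omega
      have h1 := h j hj2
      have h2 := C2 j hj1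
      exact ⟨h2.1, hR j (by omega), by linarith, h1.1⟩
    · -- down: SE
      right; right; right
      refine ⟨fun j hj => ?_, Or.inl ⟨hRi1, (h 0 h0i1).1⟩⟩
      have hj1 : j < i - 2 := by omega
      have hj2 : j < i - 1 := by omega
      have h1 := h j hj2
      have h2 := C2 j hj1
      exact ⟨h2.1, hR j (by omega), by linarith, h1.2⟩
  | left =>
    obtain ⟨hY, hL⟩ := hd
    obtain ⟨hY2, hL2⟩ := hd2
    have C2 : ∀ j, j < i - 2 → (p (i-2)).1 < (p (i-1)).1 ∧ (p (i-1)).1 < (p j).1 := by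
      rcases hsep2 with h | h | h | h
      · have h0 := h 0 h0i2
        have := hL2 0 h0i2
        linarith
      · exact h
      · obtain ⟨j, hj, hji⟩ := hY2.2
        have := h j hj
        linarith
      · obtain ⟨j, hj, hji⟩ := hY2.1
        have := h j hj
        linarith
    have hLi1 : (p i).1 < (p (i-1)).1 := hL (i-1) hi1i
    rcases hsep1 with h | h | h | h
    · have h0 := h 0 h0i1
      have := hL 0 (by omega)
      exact absurd this (by linarith)
    · have h0 := h 0 h0i1
      have := hL (i-1) hi1i
      exact absurd this (by linarith)
    · -- up: NW
      right; right; left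
      refine ⟨fun j hj => ?_, Or.inr ⟨hLi1, (h 0 h0i1).2⟩⟩
      have hj1 : j < i - 2 := by omega
      have hj2 : j < i - 1 := by omega
      have h1 := h j hj2
      have h2 := C2 j hj1
      exact ⟨h2.2, hL j (by omega), by linarith, h1.1⟩
    · -- down: SW
      right; left
      refine ⟨fun j hj => ?_, Or.inr ⟨hLi1, (h 0 h0i1).1⟩⟩
      have hj1 : j < i - 2 := by omega
      have hj2 : j < i - 1 := by omega
      have h1 := h j hj2
      have h2 := C2 j hj1
      exact ⟨h2.2, hL j (by omega), by linarith, h1.2⟩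

end Stmt14Aux

namespace Stmt14Aux

lemma buildPlus (p : ℕ → ℝ × ℝ) (m c : ℕ) (u v : Fin c → ℕ)
    (hum : ∀ k, u k < m) (hvm : ∀ k, v k < m)
    (hx : ∀ k, (p (u k)).1 < (p (v k)).1)
    (hy : ∀ k, (p (v k)).2 < (p (u k)).2)
    (hdom : ∀ k l, k < l → (p (v k)).1 < (p (u l)).1 ∧ (p (u k)).2 < (p (v l)).2) :
    containsPattern p m c pat21 := by
  have hdiv : ∀ t : Fin (2 * c), (t : ℕ) / 2 < c := by
    intro t
    have := t.isLt
    omega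
  set f : Fin (2 * c) → ℕ :=
    fun t => if (t : ℕ) % 2 = 0 then u ⟨(t : ℕ) / 2, hdiv t⟩ else v ⟨(t : ℕ) / 2, hdiv t⟩
    with hf
  -- bounds for x and y coordinates of f t within its pair
  have hxlo : ∀ t : Fin (2 * c), (p (u ⟨(t:ℕ)/2, hdiv t⟩)).1 ≤ (p (f t)).1 := by
    intro t
    by_cases h : (t : ℕ) % 2 = 0
    · simp [hf, h]
    · simp only [hf, if_neg h]
      exact le_of_lt (hx _)
  have hxhi : ∀ t : Fin (2 * c), (p (f t)).1 ≤ (p (v ⟨(t:ℕ)/2, hdiv t⟩)).1 := by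
    intro t
    by_cases h : (t : ℕ) % 2 = 0
    · simp only [hf, if_pos h]
      exact le_of_lt (hx _)
    · simp [hf, h]
  have hylo : ∀ t : Fin (2 * c), (p (v ⟨(t:ℕ)/2, hdiv t⟩)).2 ≤ (p (f t)).2 := by
    intro t
    by_cases h : (t : ℕ) % 2 = 0
    · simp only [hf, if_pos h]
      exact le_of_lt (hy _)
    · simp [hf, h]
  have hyhi : ∀ t : Fin (2 * c), (p (f t)).2 ≤ (p (u ⟨(t:ℕ)/2, hdiv t⟩)).2 := by
    intro t
    by_cases h : (t : ℕ) % 2 = 0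
    · simp [hf, h]
    · simp only [hf, if_neg h]
      exact le_of_lt (hy _)
  have hylt : ∀ s t : Fin (2 * c), (s:ℕ)/2 < (t:ℕ)/2 → (p (f s)).2 < (p (f t)).2 := by
    intro s t hst
    have hd := (hdom ⟨(s:ℕ)/2, hdiv s⟩ ⟨(t:ℕ)/2, hdiv t⟩ hst).2
    calc (p (f s)).2 ≤ _ := hyhi s
      _ < _ := hd
      _ ≤ _ := hylo t
  have hxlt : ∀ s t : Fin (2 * c), (s:ℕ)/2 < (t:ℕ)/2 → (p (f s)).1 < (p (f t)).1 := by
    intro s t hst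
    have hd := (hdom ⟨(s:ℕ)/2, hdiv s⟩ ⟨(t:ℕ)/2, hdiv t⟩ hst).1
    calc (p (f s)).1 ≤ _ := hxhi s
      _ < _ := hd
      _ ≤ _ := hxlo t
  refine ⟨f, ?_, ?_, ?_⟩
  · intro t
    by_cases h : (t : ℕ) % 2 = 0
    · simpa [hf, h] using hum _
    · simpa [hf, h] using hvm _
  · intro s t hst
    have hst' : (s : ℕ) < (t : ℕ) := hst
    rcases Nat.lt_trichotomy ((s:ℕ)/2) ((t:ℕ)/2) with h | h | h
    · exact hxlt s t h
    · -- same pair: s even, t = s+1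
      have hs0 : (s : ℕ) % 2 = 0 := by omega
      have ht1 : (t : ℕ) % 2 = 1 := by omega
      simp only [hf, if_pos hs0, if_neg (by omega : ¬ (t:ℕ) % 2 = 0)]
      have : ((s:ℕ)/2) = ((t:ℕ)/2) := h
      rw [show (⟨(s:ℕ)/2, hdiv s⟩ : Fin c) = ⟨(t:ℕ)/2, hdiv t⟩ from by simp [this]]
      exact hx _
    · omega
  · intro s t
    rcases Nat.lt_trichotomy ((s:ℕ)/2) ((t:ℕ)/2) with h | h | h
    · have hlt := hylt s t h
      have : pat21 (s:ℕ) < pat21 (t:ℕ) := by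
        unfold pat21
        split <;> split <;> omega
      simp [hlt, this]
    · by_cases hs : (s : ℕ) % 2 = 0 <;> by_cases ht : (t : ℕ) % 2 = 0
      · have hst : s = t := by
          apply Fin.ext
          omega
        subst hst
        simp
      · -- s even, t odd, same pair hence t = s+1
        have hfe : f s = u ⟨(s:ℕ)/2, hdiv s⟩ := by simp [hf, hs]
        have hft : f t = v ⟨(t:ℕ)/2, hdiv t⟩ := by simp [hf, ht]
        rw [hfe, hft, show (⟨(s:ℕ)/2, hdiv s⟩ : Fin c) = ⟨(t:ℕ)/2, hdiv t⟩ from by simp [h]]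
        have := hy (⟨(t:ℕ)/2, hdiv t⟩ : Fin c)
        constructor
        · intro hlt
          linarith
        · intro hpat
          exfalso
          unfold pat21 at hpat
          rw [if_pos hs, if_neg ht] at hpat
          omega
      · have hfe : f s = v ⟨(s:ℕ)/2, hdiv s⟩ := by simp [hf, hs]
        have hft : f t = u ⟨(t:ℕ)/2, hdiv t⟩ := by simp [hf, ht]
        rw [hfe, hft, show (⟨(s:ℕ)/2, hdiv s⟩ : Fin c) = ⟨(t:ℕ)/2, hdiv t⟩ from by simp [h]]
        have := hy (⟨(t:ℕ)/2, hdiv t⟩ : Fin c)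
        constructor
        · intro _
          unfold pat21
          rw [if_neg hs, if_pos ht]
          omega
        · intro _
          exact this
      · have hst : s = t := by
          apply Fin.ext
          omega
        subst hst
        simp
    · have hlt := hylt t s h
      have hpat : ¬ pat21 (s:ℕ) < pat21 (t:ℕ) := by
        unfold pat21
        split <;> split <;> omega
      constructor
      · intro hc
        linarith
      · intro hc
        exact absurd hc hpat

lemma buildMinus (p : ℕ → ℝ × ℝ) (m c : ℕ) (u v : Fin c → ℕ)
    (hum : ∀ k, u k < m) (hvm : ∀ k, v k < m)
    (hx : ∀ k, (p (u k)).1 < (p (v k)).1)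
    (hy : ∀ k, (p (u k)).2 < (p (v k)).2)
    (hdom : ∀ k l, k < l → (p (v k)).1 < (p (u l)).1 ∧ (p (v l)).2 < (p (u k)).2) :
    containsPattern p m c (patSkew12 c) := by
  have hdiv : ∀ t : Fin (2 * c), (t : ℕ) / 2 < c := by
    intro t
    have := t.isLt
    omega
  set f : Fin (2 * c) → ℕ :=
    fun t => if (t : ℕ) % 2 = 0 then u ⟨(t : ℕ) / 2, hdiv t⟩ else v ⟨(t : ℕ) / 2, hdiv t⟩
    with hf
  have hxlo : ∀ t : Fin (2 * c), (p (u ⟨(t:ℕ)/2, hdiv t⟩)).1 ≤ (p (f t)).1 := by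
    intro t
    by_cases h : (t : ℕ) % 2 = 0
    · simp [hf, h]
    · simp only [hf, if_neg h]
      exact le_of_lt (hx _)
  have hxhi : ∀ t : Fin (2 * c), (p (f t)).1 ≤ (p (v ⟨(t:ℕ)/2, hdiv t⟩)).1 := by
    intro t
    by_cases h : (t : ℕ) % 2 = 0
    · simp only [hf, if_pos h]
      exact le_of_lt (hx _)
    · simp [hf, h]
  have hylo : ∀ t : Fin (2 * c), (p (u ⟨(t:ℕ)/2, hdiv t⟩)).2 ≤ (p (f t)).2 := by
    intro t
    by_cases h : (t : ℕ) % 2 = 0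
    · simp [hf, h]
    · simp only [hf, if_neg h]
      exact le_of_lt (hy _)
  have hyhi : ∀ t : Fin (2 * c), (p (f t)).2 ≤ (p (v ⟨(t:ℕ)/2, hdiv t⟩)).2 := by
    intro t
    by_cases h : (t : ℕ) % 2 = 0
    · simp only [hf, if_pos h]
      exact le_of_lt (hy _)
    · simp [hf, h]
  have hylt : ∀ s t : Fin (2 * c), (s:ℕ)/2 < (t:ℕ)/2 → (p (f t)).2 < (p (f s)).2 := by
    intro s t hst
    have hd := (hdom ⟨(s:ℕ)/2, hdiv s⟩ ⟨(t:ℕ)/2, hdiv t⟩ hst).2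
    calc (p (f t)).2 ≤ _ := hyhi t
      _ < _ := hd
      _ ≤ _ := hylo s
  have hxlt : ∀ s t : Fin (2 * c), (s:ℕ)/2 < (t:ℕ)/2 → (p (f s)).1 < (p (f t)).1 := by
    intro s t hst
    have hd := (hdom ⟨(s:ℕ)/2, hdiv s⟩ ⟨(t:ℕ)/2, hdiv t⟩ hst).1
    calc (p (f s)).1 ≤ _ := hxhi s
      _ < _ := hd
      _ ≤ _ := hxlo t
  refine ⟨f, ?_, ?_, ?_⟩
  · intro t
    by_cases h : (t : ℕ) % 2 = 0
    · simpa [hf, h] using hum _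
    · simpa [hf, h] using hvm _
  · intro s t hst
    have hst' : (s : ℕ) < (t : ℕ) := hst
    rcases Nat.lt_trichotomy ((s:ℕ)/2) ((t:ℕ)/2) with h | h | h
    · exact hxlt s t h
    · have hs0 : (s : ℕ) % 2 = 0 := by omega
      simp only [hf, if_pos hs0, if_neg (by omega : ¬ (t:ℕ) % 2 = 0)]
      rw [show (⟨(s:ℕ)/2, hdiv s⟩ : Fin c) = ⟨(t:ℕ)/2, hdiv t⟩ from by simp [h]]
      exact hx _
    · omega
  · intro s t
    have hsc := hdiv s
    have htc := hdiv t
    rcases Nat.lt_trichotomy ((s:ℕ)/2) ((t:ℕ)/2) with h | h | h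
    · have hlt := hylt s t h
      have hpat : ¬ patSkew12 c (s:ℕ) < patSkew12 c (t:ℕ) := by
        unfold patSkew12
        omega
      constructor
      · intro hc
        linarith
      · intro hc
        exact absurd hc hpat
    · by_cases hs : (s : ℕ) % 2 = 0 <;> by_cases ht : (t : ℕ) % 2 = 0
      · have hst : s = t := by
          apply Fin.ext
          omega
        subst hst
        simp
      · have hfe : f s = u ⟨(s:ℕ)/2, hdiv s⟩ := by simp [hf, hs]
        have hft : f t = v ⟨(t:ℕ)/2, hdiv t⟩ := by simp [hf, ht]
        rw [hfe, hft, show (⟨(s:ℕ)/2, hdiv s⟩ : Fin c) = ⟨(t:ℕ)/2, hdiv t⟩ from by simp [h]]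
        have := hy (⟨(t:ℕ)/2, hdiv t⟩ : Fin c)
        constructor
        · intro _
          unfold patSkew12
          omega
        · intro _
          exact this
      · have hfe : f s = v ⟨(s:ℕ)/2, hdiv s⟩ := by simp [hf, hs]
        have hft : f t = u ⟨(t:ℕ)/2, hdiv t⟩ := by simp [hf, ht]
        rw [hfe, hft, show (⟨(s:ℕ)/2, hdiv s⟩ : Fin c) = ⟨(t:ℕ)/2, hdiv t⟩ from by simp [h]]
        have := hy (⟨(t:ℕ)/2, hdiv t⟩ : Fin c)
        constructor
        · intro hlt
          linarith
        · intro hpat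
          exfalso
          unfold patSkew12 at hpat
          omega
      · have hst : s = t := by
          apply Fin.ext
          omega
        subst hst
        simp
    · have hlt := hylt t s h
      have hpat : patSkew12 c (s:ℕ) < patSkew12 c (t:ℕ) := by
        unfold patSkew12
        omega
      simp [hlt, hpat]

end Stmt14Aux

namespace Stmt14Aux

lemma strictMono_gap {n : ℕ} (G : Fin n → ℕ) (hG : StrictMono G) :
    ∀ (d : ℕ) (i j : Fin n), (i : ℕ) + d = (j : ℕ) → G i + d ≤ G j := by
  intro d
  induction d with
  | zero =>
    intro i j hij
    have : i = j := Fin.ext (by omega)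
    subst this
    simp
  | succ d ih =>
    intro i j hij
    have hlt : (i : ℕ) + d < n := by
      have := j.isLt
      omega
    have h1 := ih i ⟨(i : ℕ) + d, hlt⟩ rfl
    have h2 : G ⟨(i : ℕ) + d, hlt⟩ < G j := by
      apply hG
      simp only [Fin.lt_def]
      omega
    omega

end Stmt14Aux

open Stmt14Aux in
/-- If a proper pin sequence contains `3(a+b)` turns (pins with the same
direction as the pin two steps earlier), then the permutation it forms
contains `⊕_a 21` or `⊖_b 12`. -/
theorem stmt14 (S : Set (ℝ × ℝ)) (p : ℕ → ℝ × ℝ) (m : ℕ)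
    (hp : ProperPinSeq S p m) (a b : ℕ)
    (hturns : ∃ T : Finset ℕ, 3 * (a + b) ≤ T.card ∧
      ∀ i ∈ T, 4 ≤ i ∧ i < m ∧ ∃ d : PinDir, hasDir p i d ∧ hasDir p (i - 2) d) :
    containsPattern p m a pat21 ∨ containsPattern p m b (patSkew12 b) := by
  classical
  obtain ⟨T, hTcard, hT⟩ := hturns
  obtain ⟨-, -, -, -, -, hsep⟩ := hp
  set n := T.card with hn
  set e := T.orderIsoOfFin rfl with he
  set G : Fin n → ℕ := fun k => (e k : ℕ) with hG
  have hGmono : StrictMono G := by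
    intro i j hij
    exact_mod_cast (e.lt_iff_lt).2 hij
  set g : Fin (a + b) → ℕ := fun k => G ⟨3 * (k : ℕ), by have := k.isLt; omega⟩ with hg
  have hgT : ∀ k, g k ∈ T := fun k => (e _).2
  have hgap : ∀ k l : Fin (a + b), k < l → g k + 3 ≤ g l := by
    intro k l hkl
    have h3 : (3 * (k : ℕ)) + 3 ≤ 3 * (l : ℕ) := by
      have : (k : ℕ) < (l : ℕ) := hkl
      omega
    have h1 := strictMono_gap G hGmono 3 ⟨3 * (k : ℕ), by have := k.isLt; omega⟩
      ⟨3 * (k : ℕ) + 3, by have := l.isLt; omega⟩ rfl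
    have h2 : G ⟨3 * (k : ℕ) + 3, by have := l.isLt; omega⟩ ≤ G ⟨3 * (l : ℕ), by have := l.isLt; omega⟩ := by
      rcases eq_or_lt_of_le h3 with hq | hq
    -- careful with proof irrelevance
      · exact le_of_eq (congrArg G (Fin.ext hq))
      · exact le_of_lt (hGmono (by simp only [Fin.lt_def]; omega))
    exact le_trans h1 h2
  have hginj : ∀ k l : Fin (a + b), g k = g l → k = l := by
    intro k l hkl
    rcases lt_trichotomy k l with h | h | h
    · have := hgap k l h; omega
    · exact h
    · have := hgap l k h; omega
  have hprop : ∀ k, 4 ≤ g k ∧ g k < m ∧ (NE p (g k) ∨ SW p (g k) ∨ NW p (g k) ∨ SE p (g k)) := by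
    intro k
    obtain ⟨h4, him, d, hd, hd2⟩ := hT (g k) (hgT k)
    exact ⟨h4, him, turn_class p m (g k) h4 him hsep d hd hd2⟩
  set A : Finset (Fin (a + b)) := Finset.univ.filter (fun k => NE p (g k) ∨ SW p (g k)) with hA
  by_cases hAcard : a ≤ A.card
  · -- plus side
    left
    obtain ⟨A', hA'sub, hA'card⟩ := Finset.exists_subset_card_eq hAcard
    set keyf : Fin (a + b) → ℤ := fun k => if SW p (g k) then -(g k : ℤ) else (g k : ℤ) with hkeyf
    have hkeyinj : Set.InjOn keyf A' := by
      intro k hk l hl hkl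
      apply hginj
      simp only [hkeyf] at hkl
      have h4k := (hprop k).1
      have h4l := (hprop l).1
      split_ifs at hkl <;> omega
    set keys : Finset ℤ := A'.image keyf with hkeys
    have hkeyscard : keys.card = a := by
      rw [hkeys, Finset.card_image_of_injOn hkeyinj, hA'card]
    have hkeymem : ∀ z ∈ keys, (z ≠ 0) ∧ 4 ≤ z.natAbs ∧ z.natAbs < m ∧
        ((0 < z ∧ NE p z.natAbs) ∨ (z < 0 ∧ SW p z.natAbs)) := by
      intro z hz
      obtain ⟨k, hk, hkz⟩ := Finset.mem_image.1 hz
      have h4 := (hprop k).1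
      have hm := (hprop k).2.1
      have hkA : k ∈ A := hA'sub hk
      have hks : NE p (g k) ∨ SW p (g k) := by
        simpa [hA] using hkA
      simp only [hkeyf] at hkz
      by_cases hsw : SW p (g k)
      · rw [if_pos hsw] at hkz
        subst hkz
        refine ⟨by omega, ?_, ?_, Or.inr ⟨by omega, ?_⟩⟩ <;> simp only [Int.natAbs_neg, Int.natAbs_natCast]
        · omega
        · omega
        · exact hsw
      · rw [if_neg hsw] at hkz
        subst hkz
        have hne : NE p (g k) := hks.resolve_right hsw
        refine ⟨by omega, ?_, ?_, Or.inl ⟨by omega, ?_⟩⟩ <;> simp only [Int.natAbs_natCast]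
        · omega
        · omega
        · exact hne
    have hkeygap : ∀ z ∈ keys, ∀ w ∈ keys, z ≠ w →
        z.natAbs + 3 ≤ w.natAbs ∨ w.natAbs + 3 ≤ z.natAbs := by
      intro z hz w hw hzw
      obtain ⟨k, hk, hkz⟩ := Finset.mem_image.1 hz
      obtain ⟨l, hl, hlw⟩ := Finset.mem_image.1 hw
      have hkl : k ≠ l := by
        intro h
        exact hzw (by rw [← hkz, ← hlw, h])
      have hzabs : z.natAbs = g k := by
        simp only [hkeyf] at hkz
        split_ifs at hkz <;> (subst hkz; simp)
      have hwabs : w.natAbs = g l := by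
        simp only [hkeyf] at hlw
        split_ifs at hlw <;> (subst hlw; simp)
      rcases lt_or_gt_of_ne hkl with h | h
      · left; rw [hzabs, hwabs]; exact hgap k l h
      · right; rw [hzabs, hwabs]; exact hgap l k h
    set κ := keys.orderIsoOfFin hkeyscard with hκ
    set idx : Fin a → ℕ := fun t => ((κ t : ℤ)).natAbs with hidx
    set uu : Fin a → ℕ := fun t => if (p (idx t - 1)).1 < (p (idx t)).1 then idx t - 1 else idx t with huu
    set vv : Fin a → ℕ := fun t => if (p (idx t - 1)).1 < (p (idx t)).1 then idx t else idx t - 1 with hvv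
    have hκmem : ∀ t : Fin a, (κ t : ℤ) ∈ keys := fun t => (κ t).2
    have hκmono : ∀ s t : Fin a, s < t → (κ s : ℤ) < (κ t : ℤ) := by
      intro s t hst
      exact_mod_cast (κ.lt_iff_lt).2 hst
    have hbasic : ∀ t : Fin a, 4 ≤ idx t ∧ idx t < m ∧ pairDec p (idx t) ∧
        ((0 < (κ t : ℤ) ∧ NE p (idx t)) ∨ ((κ t : ℤ) < 0 ∧ SW p (idx t))) := by
      intro t
      obtain ⟨hz0, h4, hm, hcase⟩ := hkeymem _ (hκmem t)
      refine ⟨h4, hm, ?_, hcase⟩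
      rcases hcase with ⟨-, hne⟩ | ⟨-, hsw⟩
      · exact hne.2
      · exact hsw.2
    have huvset : ∀ t : Fin a, (uu t = idx t - 1 ∧ vv t = idx t) ∨ (uu t = idx t ∧ vv t = idx t - 1) := by
      intro t
      simp only [huu, hvv]
      split_ifs with h
      · exact Or.inl ⟨rfl, rfl⟩
      · exact Or.inr ⟨rfl, rfl⟩
    have hxy : ∀ t : Fin a, (p (uu t)).1 < (p (vv t)).1 ∧ (p (vv t)).2 < (p (uu t)).2 := by
      intro t
      obtain ⟨-, -, hpd, -⟩ := hbasic t
      simp only [huu, hvv]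
      rcases hpd with ⟨h1, h2⟩ | ⟨h1, h2⟩
      · rw [if_pos h1, if_pos h1]
        exact ⟨h1, h2⟩
      · rw [if_neg (by intro hc; linarith), if_neg (by intro hc; linarith)]
        exact ⟨h1, h2⟩
    apply buildPlus p m a uu vv
    · intro t
      have := (hbasic t).2.1
      rcases huvset t with ⟨h1, -⟩ | ⟨h1, -⟩ <;> rw [h1] <;> omega
    · intro t
      have := (hbasic t).2.1
      rcases huvset t with ⟨-, h1⟩ | ⟨-, h1⟩ <;> rw [h1] <;> omega
    · intro t
      exact (hxy t).1
    · intro t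
      exact (hxy t).2
    · intro k l hkl
      have hzlt := hκmono k l hkl
      obtain ⟨h4k, hmk, -, hck⟩ := hbasic k
      obtain ⟨h4l, hml, -, hcl⟩ := hbasic l
      have hne : (κ k : ℤ) ≠ (κ l : ℤ) := ne_of_lt hzlt
      have hgp := hkeygap _ (hκmem k) _ (hκmem l) hne
      have hukle : uu k ≤ idx k := by
        rcases huvset k with ⟨h1, -⟩ | ⟨h1, -⟩ <;> omega
      have hvkle : vv k ≤ idx k := by
        rcases huvset k with ⟨-, h1⟩ | ⟨-, h1⟩ <;> omega
      have hulle : uu l ≤ idx l := by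
        rcases huvset l with ⟨h1, -⟩ | ⟨h1, -⟩ <;> omega
      have hvlle : vv l ≤ idx l := by
        rcases huvset l with ⟨-, h1⟩ | ⟨-, h1⟩ <;> omega
      rcases hck with ⟨hkpos, hkNE⟩ | ⟨hkneg, hkSW⟩ <;>
        rcases hcl with ⟨hlpos, hlNE⟩ | ⟨hlneg, hlSW⟩
      · -- NE NE : idx k < idx l
        have hkl' : idx k < idx l := by
          simp only [hidx]
          omega
        have hgap3 : idx k + 3 ≤ idx l := by
          have hgp' : idx k + 3 ≤ idx l ∨ idx l + 3 ≤ idx k := hgp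
          rcases hgp' with h | h
          · exact h
          · omega
        have b1 := hlNE.1 (uu k) (by omega)
        have b2 := hlNE.1 (vv k) (by omega)
        constructor
        · rcases huvset l with ⟨h1, -⟩ | ⟨h1, -⟩ <;> rw [h1]
          · exact b2.1
          · exact b2.2.1
        · rcases huvset l with ⟨-, h1⟩ | ⟨-, h1⟩ <;> rw [h1]
          · exact b1.2.2.2
          · exact b1.2.2.1
      · -- NE (k) and SW (l) with κ k < κ l : impossible since κ k > 0 > κ l
        exfalso
        omega
      · -- SW (k), NE (l)
        have hgp' : idx k + 3 ≤ idx l ∨ idx l + 3 ≤ idx k := hgp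
        rcases hgp' with h | h
        · -- idx k + 3 ≤ idx l : use NE at l
          have b1 := hlNE.1 (uu k) (by omega)
          have b2 := hlNE.1 (vv k) (by omega)
          constructor
          · rcases huvset l with ⟨h1, -⟩ | ⟨h1, -⟩ <;> rw [h1]
            · exact b2.1
            · exact b2.2.1
          · rcases huvset l with ⟨-, h1⟩ | ⟨-, h1⟩ <;> rw [h1]
            · exact b1.2.2.2
            · exact b1.2.2.1
        · -- idx l + 3 ≤ idx k : use SW at k
          have b1 := hkSW.1 (uu l) (by omega)
          have b2 := hkSW.1 (vv l) (by omega)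
          constructor
          · rcases huvset k with ⟨-, h1⟩ | ⟨-, h1⟩ <;> rw [h1]
            · exact b1.2.1
            · exact b1.1
          · rcases huvset k with ⟨h1, -⟩ | ⟨h1, -⟩ <;> rw [h1]
            · exact b2.2.2.1
            · exact b2.2.2.2
      · -- SW SW : κ k < κ l < 0 hence idx l < idx k
        have hkl' : idx l < idx k := by
          simp only [hidx]
          omega
        have hgap3 : idx l + 3 ≤ idx k := by
          have hgp' : idx k + 3 ≤ idx l ∨ idx l + 3 ≤ idx k := hgp
          rcases hgp' with h | h
          · omega
          · exact h
        have b1 := hkSW.1 (uu l) (by omega)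
        have b2 := hkSW.1 (vv l) (by omega)
        constructor
        · rcases huvset k with ⟨-, h1⟩ | ⟨-, h1⟩ <;> rw [h1]
          · exact b1.2.1
          · exact b1.1
        · rcases huvset k with ⟨h1, -⟩ | ⟨h1, -⟩ <;> rw [h1]
          · exact b2.2.2.1
          · exact b2.2.2.2
  · -- minus side
    right
    set B : Finset (Fin (a + b)) := Finset.univ.filter (fun k => ¬(NE p (g k) ∨ SW p (g k))) with hB
    have hBcard : b ≤ B.card := by
      have hsum := Finset.card_filter_add_card_filter_not
        (s := (Finset.univ : Finset (Fin (a + b)))) (p := fun k => NE p (g k) ∨ SW p (g k))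
      simp only [Finset.card_univ, Fintype.card_fin] at hsum
      rw [← hA, ← hB] at hsum
      omega
    obtain ⟨B', hB'sub, hB'card⟩ := Finset.exists_subset_card_eq hBcard
    set keyf : Fin (a + b) → ℤ := fun k => if NW p (g k) then -(g k : ℤ) else (g k : ℤ) with hkeyf
    have hkeyinj : Set.InjOn keyf B' := by
      intro k hk l hl hkl
      apply hginj
      simp only [hkeyf] at hkl
      have h4k := (hprop k).1
      have h4l := (hprop l).1
      split_ifs at hkl <;> omega
    set keys : Finset ℤ := B'.image keyf with hkeys
    have hkeyscard : keys.card = b := by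
      rw [hkeys, Finset.card_image_of_injOn hkeyinj, hB'card]
    have hkeymem : ∀ z ∈ keys, (z ≠ 0) ∧ 4 ≤ z.natAbs ∧ z.natAbs < m ∧
        ((0 < z ∧ SE p z.natAbs) ∨ (z < 0 ∧ NW p z.natAbs)) := by
      intro z hz
      obtain ⟨k, hk, hkz⟩ := Finset.mem_image.1 hz
      have h4 := (hprop k).1
      have hm := (hprop k).2.1
      have hkB : k ∈ B := hB'sub hk
      have hknot : ¬(NE p (g k) ∨ SW p (g k)) := by
        simpa [hB] using hkB
      have hks : NW p (g k) ∨ SE p (g k) := by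
        rcases (hprop k).2.2 with h | h | h | h
        · exact absurd (Or.inl h) hknot
        · exact absurd (Or.inr h) hknot
        · exact Or.inl h
        · exact Or.inr h
      simp only [hkeyf] at hkz
      by_cases hnw : NW p (g k)
      · rw [if_pos hnw] at hkz
        subst hkz
        refine ⟨by omega, ?_, ?_, Or.inr ⟨by omega, ?_⟩⟩ <;> simp only [Int.natAbs_neg, Int.natAbs_natCast]
        · omega
        · omega
        · exact hnw
      · rw [if_neg hnw] at hkz
        subst hkz
        have hse : SE p (g k) := hks.resolve_left hnw
        refine ⟨by omega, ?_, ?_, Or.inl ⟨by omega, ?_⟩⟩ <;> simp only [Int.natAbs_natCast]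
        · omega
        · omega
        · exact hse
    have hkeygap : ∀ z ∈ keys, ∀ w ∈ keys, z ≠ w →
        z.natAbs + 3 ≤ w.natAbs ∨ w.natAbs + 3 ≤ z.natAbs := by
      intro z hz w hw hzw
      obtain ⟨k, hk, hkz⟩ := Finset.mem_image.1 hz
      obtain ⟨l, hl, hlw⟩ := Finset.mem_image.1 hw
      have hkl : k ≠ l := by
        intro h
        exact hzw (by rw [← hkz, ← hlw, h])
      have hzabs : z.natAbs = g k := by
        simp only [hkeyf] at hkz
        split_ifs at hkz <;> (subst hkz; simp)
      have hwabs : w.natAbs = g l := by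
        simp only [hkeyf] at hlw
        split_ifs at hlw <;> (subst hlw; simp)
      rcases lt_or_gt_of_ne hkl with h | h
      · left; rw [hzabs, hwabs]; exact hgap k l h
      · right; rw [hzabs, hwabs]; exact hgap l k h
    set κ := keys.orderIsoOfFin hkeyscard with hκ
    set idx : Fin b → ℕ := fun t => ((κ t : ℤ)).natAbs with hidx
    set uu : Fin b → ℕ := fun t => if (p (idx t - 1)).1 < (p (idx t)).1 then idx t - 1 else idx t with huu
    set vv : Fin b → ℕ := fun t => if (p (idx t - 1)).1 < (p (idx t)).1 then idx t else idx t - 1 with hvv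
    have hκmem : ∀ t : Fin b, (κ t : ℤ) ∈ keys := fun t => (κ t).2
    have hκmono : ∀ s t : Fin b, s < t → (κ s : ℤ) < (κ t : ℤ) := by
      intro s t hst
      exact_mod_cast (κ.lt_iff_lt).2 hst
    have hbasic : ∀ t : Fin b, 4 ≤ idx t ∧ idx t < m ∧ pairInc p (idx t) ∧
        ((0 < (κ t : ℤ) ∧ SE p (idx t)) ∨ ((κ t : ℤ) < 0 ∧ NW p (idx t))) := by
      intro t
      obtain ⟨hz0, h4, hm, hcase⟩ := hkeymem _ (hκmem t)
      refine ⟨h4, hm, ?_, hcase⟩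
      rcases hcase with ⟨-, hse⟩ | ⟨-, hnw⟩
      · exact hse.2
      · exact hnw.2
    have huvset : ∀ t : Fin b, (uu t = idx t - 1 ∧ vv t = idx t) ∨ (uu t = idx t ∧ vv t = idx t - 1) := by
      intro t
      simp only [huu, hvv]
      split_ifs with h
      · exact Or.inl ⟨rfl, rfl⟩
      · exact Or.inr ⟨rfl, rfl⟩
    have hxy : ∀ t : Fin b, (p (uu t)).1 < (p (vv t)).1 ∧ (p (uu t)).2 < (p (vv t)).2 := by
      intro t
      obtain ⟨-, -, hpd, -⟩ := hbasic t
      simp only [huu, hvv]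
      rcases hpd with ⟨h1, h2⟩ | ⟨h1, h2⟩
      · rw [if_pos h1, if_pos h1]
        exact ⟨h1, h2⟩
      · rw [if_neg (by intro hc; linarith), if_neg (by intro hc; linarith)]
        exact ⟨h1, h2⟩
    apply buildMinus p m b uu vv
    · intro t
      have := (hbasic t).2.1
      rcases huvset t with ⟨h1, -⟩ | ⟨h1, -⟩ <;> rw [h1] <;> omega
    · intro t
      have := (hbasic t).2.1
      rcases huvset t with ⟨-, h1⟩ | ⟨-, h1⟩ <;> rw [h1] <;> omega
    · intro t
      exact (hxy t).1
    · intro t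
      exact (hxy t).2
    · intro k l hkl
      have hzlt := hκmono k l hkl
      obtain ⟨h4k, hmk, -, hck⟩ := hbasic k
      obtain ⟨h4l, hml, -, hcl⟩ := hbasic l
      have hne : (κ k : ℤ) ≠ (κ l : ℤ) := ne_of_lt hzlt
      have hgp := hkeygap _ (hκmem k) _ (hκmem l) hne
      have hgp' : idx k + 3 ≤ idx l ∨ idx l + 3 ≤ idx k := hgp
      have hukle : uu k ≤ idx k := by
        rcases huvset k with ⟨h1, -⟩ | ⟨h1, -⟩ <;> omega
      have hvkle : vv k ≤ idx k := by
        rcases huvset k with ⟨-, h1⟩ | ⟨-, h1⟩ <;> omega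
      have hulle : uu l ≤ idx l := by
        rcases huvset l with ⟨h1, -⟩ | ⟨h1, -⟩ <;> omega
      have hvlle : vv l ≤ idx l := by
        rcases huvset l with ⟨-, h1⟩ | ⟨-, h1⟩ <;> omega
      rcases hck with ⟨hkpos, hkSE⟩ | ⟨hkneg, hkNW⟩ <;>
        rcases hcl with ⟨hlpos, hlSE⟩ | ⟨hlneg, hlNW⟩
      · -- SE SE : idx k < idx l
        have hkl' : idx k < idx l := by
          simp only [hidx]
          omega
        have hgap3 : idx k + 3 ≤ idx l := by
          rcases hgp' with h | h
          · exact h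
          · omega
        have b1 := hlSE.1 (uu k) (by omega)
        have b2 := hlSE.1 (vv k) (by omega)
        constructor
        · rcases huvset l with ⟨h1, -⟩ | ⟨h1, -⟩ <;> rw [h1]
          · exact b2.1
          · exact b2.2.1
        · rcases huvset l with ⟨-, h1⟩ | ⟨-, h1⟩ <;> rw [h1]
          · exact b1.2.2.2
          · exact b1.2.2.1
      · -- SE (k), NW (l) with κ k < κ l : impossible
        exfalso
        omega
      · -- NW (k), SE (l)
        rcases hgp' with h | h
        · have b1 := hlSE.1 (uu k) (by omega)
          have b2 := hlSE.1 (vv k) (by omega)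
          constructor
          · rcases huvset l with ⟨h1, -⟩ | ⟨h1, -⟩ <;> rw [h1]
            · exact b2.1
            · exact b2.2.1
          · rcases huvset l with ⟨-, h1⟩ | ⟨-, h1⟩ <;> rw [h1]
            · exact b1.2.2.2
            · exact b1.2.2.1
        · have b1 := hkNW.1 (uu l) (by omega)
          have b2 := hkNW.1 (vv l) (by omega)
          constructor
          · rcases huvset k with ⟨-, h1⟩ | ⟨-, h1⟩ <;> rw [h1]
            · exact b1.2.1
            · exact b1.1
          · rcases huvset k with ⟨h1, -⟩ | ⟨h1, -⟩ <;> rw [h1]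
            · exact b2.2.2.1
            · exact b2.2.2.2
      · -- NW NW : idx l < idx k
        have hkl' : idx l < idx k := by
          simp only [hidx]
          omega
        have hgap3 : idx l + 3 ≤ idx k := by
          rcases hgp' with h | h
          · omega
          · exact h
        have b1 := hkNW.1 (uu l) (by omega)
        have b2 := hkNW.1 (vv l) (by omega)
        constructor
        · rcases huvset k with ⟨-, h1⟩ | ⟨-, h1⟩ <;> rw [h1]
          · exact b1.2.1
          · exact b1.1
        · rcases huvset k with ⟨h1, -⟩ | ⟨h1, -⟩ <;> rw [h1]
          · exact b2.2.2.1
          · exact b2.2.2.2
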